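/- Let K* = Pᶠ·Hᵀ·(H·Pᶠ·Hᵀ + R)⁻¹ be the Kalman gain. Then for every n×m real matrix K, (n/2)·log(2·π·e) + (1/2)·log(det(Pᵃ(K*))) ≤ (n/2)·log(2·π·e) + (1/2)·log(det(Pᵃ(K))); that is, the Kalman gain minimizes the differential entropy of the analysis distribution, where the quantity (n/2)·log(2πe) + (1/2)·log(det(Σ)) is the differential entropy of an n-dimensional Gaussian distribution with covariance matrix Σ. -/

import Mathlib

/-!
With `S = H Pᶠ Hᵀ + R` and `K* = Pᶠ Hᵀ S⁻¹`, completing the square in `K` gives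
`Pᵃ(K) = Pᵃ(K*) + (K - K*) S (K - K*)ᵀ`, so `Pᵃ(K)` exceeds the positive definite `Pᵃ(K*)` by a
positive semidefinite matrix. The determinant is monotone along such increments: writing
`A = bᴴ b` with `b` invertible, `det (A + B) = det A · det (1 + b⁻ᴴ B b⁻¹)`, and the last factor is
a product of eigenvalues that are all at least `1`. Monotonicity of `log` finishes.
-/

open Matrix

namespace Matrix

variable {n : Type*} [Fintype n] [DecidableEq n]

lemma PosSemidef.one_le_det_one_add {C : Matrix n n ℝ} (hC : C.PosSemidef) :
    1 ≤ (1 + C).det := by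
  set U := hC.isHermitian.eigenvectorUnitary
  have hdiag : 1 + C = Unitary.conjStarAlgAut ℝ _ U
      (diagonal (1 + hC.isHermitian.eigenvalues)) := by
    conv_lhs => rw [hC.isHermitian.spectral_theorem]
    rw [← map_one (Unitary.conjStarAlgAut ℝ _ U), ← map_add, ← diagonal_one, diagonal_add]
    rfl
  rw [hdiag, Unitary.conjStarAlgAut_apply, det_mul_comm, ← mul_assoc, Unitary.coe_star_mul_self,
    one_mul, det_diagonal]
  exact Finset.one_le_prod fun i _ ↦ le_add_of_nonneg_right (hC.eigenvalues_nonneg i)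

open scoped MatrixOrder in
lemma PosDef.det_le_det_add {A B : Matrix n n ℝ} (hA : A.PosDef) (hB : B.PosSemidef) :
    A.det ≤ (A + B).det := by
  obtain ⟨b, hb, rfl⟩ := (CStarAlgebra.isStrictlyPositive_TFAE.out 0 5).mp hA.isStrictlyPositive
  have hinv : b⁻¹ * b = 1 := nonsing_inv_mul b ((isUnit_iff_isUnit_det b).mp hb)
  have hfactor : star b * b + B = star b * (1 + (b⁻¹)ᴴ * B * b⁻¹) * b := by
    rw [mul_add, add_mul, mul_one, star_eq_conjTranspose, ← mul_assoc, ← mul_assoc,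
      ← conjTranspose_mul, hinv, conjTranspose_one, one_mul, mul_assoc, hinv, mul_one]
  calc (star b * b).det = (star b * b).det * 1 := (mul_one _).symm
    _ ≤ (star b * b).det * (1 + (b⁻¹)ᴴ * B * b⁻¹).det :=
      mul_le_mul_of_nonneg_left (hB.conjTranspose_mul_mul_same b⁻¹).one_le_det_one_add
        hA.det_pos.le
    _ = (star b * b + B).det := by rw [hfactor, det_mul, det_mul, det_mul]; ring

omit [DecidableEq n] in
lemma dotProduct_mul_mul_transpose_mulVec {k : Type*} [Fintype k] (B : Matrix n k ℝ)
    (M : Matrix k k ℝ) (x : n → ℝ) :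
    x ⬝ᵥ (B * M * Bᵀ) *ᵥ x = (Bᵀ *ᵥ x) ⬝ᵥ M *ᵥ (Bᵀ *ᵥ x) := by
  rw [← mulVec_mulVec, ← mulVec_mulVec, dotProduct_mulVec, ← mulVec_transpose]

end Matrix

section Kalman

variable {α : Type*} [CommRing α] {n m : Type*} [Fintype n] [Fintype m] [DecidableEq n]
  [DecidableEq m] (P : Matrix n n α) (R : Matrix m m α) (H : Matrix m n α)

def josephCovariance (K : Matrix n m α) : Matrix n n α :=
  (1 - K * H) * P * (1 - K * H)ᵀ + K * R * Kᵀ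

def innovationCovariance : Matrix m m α :=
  H * P * Hᵀ + R

noncomputable def kalmanGain : Matrix n m α :=
  P * Hᵀ * (innovationCovariance P R H)⁻¹

omit [DecidableEq m] in
lemma josephCovariance_eq (K : Matrix n m α) :
    josephCovariance P R H K =
      P - K * H * P - P * Hᵀ * Kᵀ + K * innovationCovariance P R H * Kᵀ := by
  simp only [josephCovariance, innovationCovariance, transpose_sub, transpose_one, transpose_mul,
    Matrix.sub_mul, Matrix.mul_sub, Matrix.one_mul, Matrix.mul_one, Matrix.mul_add,
    Matrix.add_mul, Matrix.mul_assoc]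
  abel

variable {P R}

omit [Fintype m] [DecidableEq n] [DecidableEq m] in
lemma innovationCovariance_isSymm (hP : P.IsSymm) (hR : R.IsSymm) :
    (innovationCovariance P R H).IsSymm := by
  rw [IsSymm, innovationCovariance, transpose_add, transpose_mul, transpose_mul,
    transpose_transpose, hP.eq, hR.eq, Matrix.mul_assoc]

lemma josephCovariance_eq_kalmanGain_add (hP : P.IsSymm) (hR : R.IsSymm)
    (hS : IsUnit (innovationCovariance P R H).det) (K : Matrix n m α) :
    josephCovariance P R H K = josephCovariance P R H (kalmanGain P R H) +
      (K - kalmanGain P R H) * innovationCovariance P R H * (K - kalmanGain P R H)ᵀ := by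
  have hGS : kalmanGain P R H * innovationCovariance P R H = P * Hᵀ := by
    rw [kalmanGain, Matrix.mul_assoc, nonsing_inv_mul _ hS, Matrix.mul_one]
  have hSG : innovationCovariance P R H * (kalmanGain P R H)ᵀ = H * P := by
    rw [← (innovationCovariance_isSymm H hP hR).eq, ← transpose_mul, hGS, transpose_mul,
      transpose_transpose, hP.eq]
  rw [josephCovariance_eq, josephCovariance_eq]
  simp only [transpose_sub, Matrix.sub_mul, Matrix.mul_sub, Matrix.mul_assoc, ← hSG]
  simp only [← Matrix.mul_assoc, hGS]
  abel

end Kalman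

section Real

variable {n m : Type*} [Fintype n] [Fintype m] [DecidableEq n] [DecidableEq m]
  {P : Matrix n n ℝ} {R : Matrix m m ℝ}

omit [DecidableEq m] in
lemma josephCovariance_posDef (hP : P.PosDef) (hR : R.PosDef) (H : Matrix m n ℝ)
    (K : Matrix n m ℝ) : (josephCovariance P R H K).PosDef := by
  have hPterm := hP.posSemidef.mul_mul_conjTranspose_same (1 - K * H)
  have hRterm := hR.posSemidef.mul_mul_conjTranspose_same K
  simp only [conjTranspose_eq_transpose_of_trivial] at hPterm hRterm
  refine .of_dotProduct_mulVec_pos (hPterm.add hRterm).isHermitian fun x hx ↦ ?_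
  rw [star_trivial, josephCovariance, add_mulVec, dotProduct_add,
    dotProduct_mul_mul_transpose_mulVec, dotProduct_mul_mul_transpose_mulVec]
  by_cases hKx : Kᵀ *ᵥ x = 0
  · have hx_fixed : (1 - K * H)ᵀ *ᵥ x = x := by
      rw [transpose_sub, transpose_one, transpose_mul, sub_mulVec, one_mulVec, ← mulVec_mulVec,
        hKx, mulVec_zero, sub_zero]
    rw [hx_fixed, hKx, mulVec_zero, dotProduct_zero, add_zero]
    simpa only [star_trivial] using hP.dotProduct_mulVec_pos hx
  · simpa only [star_trivial] using add_pos_of_nonneg_of_pos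
      (hP.posSemidef.dotProduct_mulVec_nonneg ((1 - K * H)ᵀ *ᵥ x)) (hR.dotProduct_mulVec_pos hKx)

omit [DecidableEq n] [DecidableEq m] in
lemma innovationCovariance_posDef (hP : P.PosDef) (hR : R.PosDef) (H : Matrix m n ℝ) :
    (innovationCovariance P R H).PosDef := by
  simpa [innovationCovariance] using
    PosDef.posSemidef_add (hP.posSemidef.mul_mul_conjTranspose_same H) hR

lemma det_josephCovariance_kalmanGain_le (hP : P.PosDef) (hR : R.PosDef) (H : Matrix m n ℝ)
    (K : Matrix n m ℝ) :
    (josephCovariance P R H (kalmanGain P R H)).det ≤ (josephCovariance P R H K).det := by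
  have hS := innovationCovariance_posDef hP hR H
  rw [josephCovariance_eq_kalmanGain_add H (isHermitian_iff_isSymm.mp hP.isHermitian)
    (isHermitian_iff_isSymm.mp hR.isHermitian) hS.det_pos.ne'.isUnit K]
  refine (josephCovariance_posDef hP hR H _).det_le_det_add ?_
  simpa using hS.posSemidef.mul_mul_conjTranspose_same (K - kalmanGain P R H)

end Real

theorem kalman_gain_minimizes_differential_entropy_general
    (n m : ℕ)
    (Pf : Matrix (Fin n) (Fin n) ℝ) (hPf : Pf.PosDef)
    (R : Matrix (Fin m) (Fin m) ℝ) (hR : R.PosDef)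
    (H : Matrix (Fin m) (Fin n) ℝ)
    (Pa : Matrix (Fin n) (Fin m) ℝ → Matrix (Fin n) (Fin n) ℝ)
    (hPa : ∀ K, Pa K = (1 - K * H) * Pf * (1 - K * H)ᵀ + K * R * Kᵀ)
    (Kstar : Matrix (Fin n) (Fin m) ℝ)
    (hKstar : Kstar = Pf * Hᵀ * (H * Pf * Hᵀ + R)⁻¹) :
    ∀ K : Matrix (Fin n) (Fin m) ℝ,
      (n : ℝ) / 2 * Real.log (2 * Real.pi * Real.exp 1)
          + 1 / 2 * Real.log (Pa Kstar).det
        ≤ (n : ℝ) / 2 * Real.log (2 * Real.pi * Real.exp 1)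
          + 1 / 2 * Real.log (Pa K).det := by
  intro K
  obtain rfl : Pa = josephCovariance Pf R H := funext hPa
  obtain rfl : Kstar = kalmanGain Pf R H := hKstar
  gcongr
  · exact (josephCovariance_posDef hPf hR H _).det_pos
  · exact det_josephCovariance_kalmanGain_le hPf hR H K

/-- Under Gaussian error assumptions, the Kalman gain
`K* = Pᶠ Hᵀ (H Pᶠ Hᵀ + R)⁻¹` minimizes the differential entropy
`(n/2) log (2 π e) + (1/2) log (det Σ)` of the analysis distribution, whose
covariance is `Pᵃ(K) = (I − K H) Pᶠ (I − K H)ᵀ + K R Kᵀ`. -/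
theorem kalman_gain_minimizes_differential_entropy
    (n m : ℕ) (hn : 0 < n) (hm : 0 < m)
    (Pf : Matrix (Fin n) (Fin n) ℝ) (hPf : Pf.PosDef)
    (R : Matrix (Fin m) (Fin m) ℝ) (hR : R.PosDef)
    (H : Matrix (Fin m) (Fin n) ℝ)
    (Pa : Matrix (Fin n) (Fin m) ℝ → Matrix (Fin n) (Fin n) ℝ)
    (hPa : ∀ K, Pa K = (1 - K * H) * Pf * (1 - K * H)ᵀ + K * R * Kᵀ)
    (Kstar : Matrix (Fin n) (Fin m) ℝ)
    (hKstar : Kstar = Pf * Hᵀ * (H * Pf * Hᵀ + R)⁻¹) :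
    ∀ K : Matrix (Fin n) (Fin m) ℝ,
      (n : ℝ) / 2 * Real.log (2 * Real.pi * Real.exp 1)
          + 1 / 2 * Real.log (Pa Kstar).det
        ≤ (n : ℝ) / 2 * Real.log (2 * Real.pi * Real.exp 1)
          + 1 / 2 * Real.log (Pa K).det :=
  kalman_gain_minimizes_differential_entropy_general n m Pf hPf R hR H Pa hPa Kstar hKstar
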